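/- arXiv:1707.09936 — 3 statements merged into one kernel-verified Lean document; each statement's English description precedes it below -/
import Mathlib

section
/- Let (R, m) and (T, η) be Noetherian local rings such that T/mT is a zero-dimensional Gorenstein ring, and let h: R → T be a finite local ring homomorphism (h(m) ⊆ η) such that T is free as an R-module. Then there exists a T-module isomorphism β: T → T* = Hom_R(T, R) (where T acts on T* by (t·φ)(x) = φ(tx)) such that for every ideal J ⊆ T, β⁻¹((T/J)*) = Ann_T J, where (T/J)* is identified with {f ∈ T* : f(J) = 0}. -/
/-!
The socle generator `u` of the Gorenstein fibre `A = T/𝔪T` lies in every nonzero principal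
ideal, so any functional `ψ` on `A` with `ψ u ≠ 0` makes `(a, b) ↦ ψ (a b)` a perfect pairing.
Lift `ψ` to `φ : T → R`. The Gram matrix of `(a, b) ↦ φ (a b)` in a basis of `T` reduces
modulo `𝔪` to that of the perfect pairing, so its determinant is a unit and `β a = φ (a * ·)` is
an isomorphism. Every functional on `T` is then some `φ (t * ·)`, and functionals separate the
points of the free module `T`; hence `β a` vanishes on `J` exactly when `a J = 0`.
-/

/-- A local Artinian (i.e. zero-dimensional Noetherian local) ring with one-dimensional
socle, i.e. a zero-dimensional Gorenstein local ring. -/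
def IsZeroDimGorensteinP (A : Type*) [CommRing A] : Prop :=
  IsNoetherianRing A ∧ IsLocalRing A ∧ ringKrullDim A = 0 ∧
    ∃ u : A, u ≠ 0 ∧ ∀ η : Ideal A, η.IsMaximal →
      Submodule.annihilator (η : Submodule A A) = Ideal.span {u}

open IsLocalRing Module

theorem Ideal.exists_ne_zero_mem_annihilator_of_mul_pow_eq_bot {A : Type*} [CommRing A]
    {I P : Ideal A} {N : ℕ} (hI : I * P ^ N = ⊥) (hI0 : I ≠ ⊥) :
    ∃ y ∈ I, y ≠ 0 ∧ y ∈ Submodule.annihilator (P : Submodule A A) := by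
  induction N generalizing I with
  | zero => simp_all
  | succ N ih =>
    by_cases hIP : I * P = ⊥
    · obtain ⟨y, hy, hy0⟩ := Submodule.exists_mem_ne_zero_of_ne_bot hI0
      refine ⟨y, hy, hy0, Submodule.mem_annihilator.mpr fun z hz => ?_⟩
      simpa [hIP, mul_comm] using Ideal.mul_mem_mul hy hz
    · have hIPN : I * P * P ^ N = ⊥ := by rw [mul_assoc, ← pow_succ']; exact hI
      obtain ⟨y, hy, hy0, hyP⟩ := ih hIPN hIP
      exact ⟨y, (Ideal.mul_le_inf hy).1, hy0, hyP⟩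

theorem IsZeroDimGorensteinP.exists_forall_mem_span_singleton {A : Type*} [CommRing A]
    (h : IsZeroDimGorensteinP A) : ∃ u : A, u ≠ 0 ∧ ∀ a : A, a ≠ 0 → u ∈ Ideal.span {a} := by
  obtain ⟨_, _, hdim, u, hu0, hsoc⟩ := h
  have : IsArtinianRing A :=
    isArtinianRing_iff_krullDimLE_zero.mpr (Ring.krullDimLE_iff.mpr hdim.le)
  obtain ⟨N, hN⟩ := (isArtinianRing_iff_isNilpotent_maximalIdeal A).mp this
  have hsoc := hsoc _ (maximalIdeal.isMaximal A)
  refine ⟨u, hu0, fun a ha => ?_⟩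
  obtain ⟨y, hya, hy0, hy⟩ := Ideal.exists_ne_zero_mem_annihilator_of_mul_pow_eq_bot
    (by rw [hN, Ideal.zero_eq_bot, Ideal.mul_bot]) (Ideal.span_singleton_eq_bot.not.mpr ha)
  rw [hsoc] at hy
  obtain ⟨c, rfl⟩ := Ideal.mem_span_singleton'.mp hy
  have hc : IsUnit c := by
    by_contra hc
    have hu : u ∈ Submodule.annihilator ((maximalIdeal A : Ideal A) : Submodule A A) :=
      hsoc ▸ Ideal.mem_span_singleton_self u
    have huc := Submodule.mem_annihilator.mp hu c ((mem_maximalIdeal c).mpr hc)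
    exact hy0 (by rwa [smul_eq_mul, mul_comm] at huc)
  simpa [← mul_assoc] using Ideal.mul_mem_left _ (↑hc.unit⁻¹ : A) hya

theorem IsZeroDimGorensteinP.exists_bijective_mul_compr₂ {k A : Type*} [Field k] [CommRing A]
    [Algebra k A] [FiniteDimensional k A] (h : IsZeroDimGorensteinP A) :
    ∃ ψ : A →ₗ[k] k, Function.Bijective ((LinearMap.mul k A).compr₂ ψ) := by
  obtain ⟨u, hu0, hu⟩ := h.exists_forall_mem_span_singleton
  obtain ⟨ψ, hψ⟩ := Projective.exists_dual_ne_zero k hu0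
  have hinj : Function.Injective ((LinearMap.mul k A).compr₂ ψ) := by
    refine (injective_iff_map_eq_zero _).mpr fun a ha => by_contra fun ha0 => hψ ?_
    obtain ⟨c, rfl⟩ := Ideal.mem_span_singleton'.mp (hu a ha0)
    simpa [mul_comm] using LinearMap.congr_fun ha c
  exact ⟨ψ, hinj, (LinearMap.injective_iff_surjective_of_finrank_eq_finrank
    Subspace.dual_finrank_eq.symm).mp hinj⟩

theorem Module.Projective.exists_quotient_mk_comp_eq {R T : Type*} [CommRing R] [CommRing T]
    [Algebra R T] [Projective R T] (p : Ideal R)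
    (ψ : T ⧸ p.map (algebraMap R T) →ₗ[R ⧸ p] R ⧸ p) :
    ∃ φ : T →ₗ[R] R, ∀ x, Ideal.Quotient.mk p (φ x) = ψ (Ideal.Quotient.mk _ x) := by
  obtain ⟨φ, hφ⟩ := projective_lifting_property (Ideal.Quotient.mkₐ R p).toLinearMap
    ((ψ.restrictScalars R).comp (Ideal.Quotient.mkₐ R _).toLinearMap)
    (Ideal.Quotient.mkₐ_surjective R p)
  exact ⟨φ, LinearMap.congr_fun hφ⟩

theorem IsLocalRing.isUnit_det_of_isUnit_det_map_quotient_mk {R n : Type*} [CommRing R]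
    [IsLocalRing R] [Fintype n] [DecidableEq n] (M : Matrix n n R)
    (h : IsUnit (M.map (Ideal.Quotient.mk (maximalIdeal R))).det) : IsUnit M.det := by
  rw [← RingHom.mapMatrix_apply, ← RingHom.map_det] at h
  exact (isUnit_map_iff (residue R) _).mp h

theorem forall_apply_mul_eq_zero_iff_mem_annihilator {R T : Type*} [CommRing R] [CommRing T]
    [Algebra R T] [Projective R T] {φ : T →ₗ[R] R}
    (hφ : Function.Surjective ((LinearMap.mul R T).compr₂ φ)) (J : Ideal T) (a : T) :
    (∀ j ∈ J, φ (a * j) = 0) ↔ a ∈ Submodule.annihilator (J : Submodule T T) := by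
  refine ⟨fun ha => Submodule.mem_annihilator.mpr fun j hj => ?_, fun ha j hj => ?_⟩
  · refine (forall_dual_apply_eq_zero_iff R _).mp fun f => ?_
    obtain ⟨t, rfl⟩ := hφ f
    simpa [mul_left_comm t a j] using ha _ (J.mul_mem_left t hj)
  · simpa using congrArg φ (Submodule.mem_annihilator.mp ha j hj)

attribute [local instance] Ideal.Quotient.field

theorem IsLocalRing.bijective_mul_compr₂_of_quotient {R T : Type*} [CommRing R] [CommRing T]
    [IsLocalRing R] [Algebra R T] [Module.Finite R T] [Module.Free R T] {φ : T →ₗ[R] R}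
    {ψ : T ⧸ (maximalIdeal R).map (algebraMap R T) →ₗ[R ⧸ maximalIdeal R] R ⧸ maximalIdeal R}
    (hφ : ∀ x, Ideal.Quotient.mk _ (φ x) = ψ (Ideal.Quotient.mk _ x))
    (hψ : Function.Bijective ((LinearMap.mul _ _).compr₂ ψ)) :
    Function.Bijective ((LinearMap.mul R T).compr₂ φ) := by
  classical
  let b := Free.chooseBasis R T
  let b' := basisQuotient b
  have hG : (LinearMap.toMatrix b b.dualBasis ((LinearMap.mul R T).compr₂ φ)).map
      (Ideal.Quotient.mk _) =
        LinearMap.toMatrix b' b'.dualBasis ((LinearMap.mul _ _).compr₂ ψ) := by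
    ext i j
    simp [LinearMap.toMatrix_apply, b', basisQuotient_apply, hφ]
  have hdet := isUnit_det_of_isUnit_det_map_quotient_mk _
    (hG ▸ (LinearEquiv.ofBijective _ hψ).isUnit_det b' b'.dualBasis)
  exact (LinearEquiv.ofIsUnitDet hdet).bijective

theorem exists_dual_isomorphism_of_free_gorenstein_general
    (R T : Type*) [CommRing R] [CommRing T] [IsLocalRing R]
    [Algebra R T] [Module.Finite R T] [Module.Free R T]
    (hgor : IsZeroDimGorensteinP
      (T ⧸ Ideal.map (algebraMap R T) (IsLocalRing.maximalIdeal R))) :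
    ∃ β : T ≃ₗ[R] (T →ₗ[R] R),
      (∀ t a y : T, β (t * a) y = β a (t * y)) ∧
      (∀ J : Ideal T, ∀ a : T,
        ((∀ j ∈ J, β a j = 0) ↔ a ∈ Submodule.annihilator (J : Submodule T T))) := by
  have : Module.Finite (R ⧸ maximalIdeal R) (T ⧸ (maximalIdeal R).map (algebraMap R T)) :=
    .of_restrictScalars_finite R _ _
  obtain ⟨ψ, hψ⟩ := hgor.exists_bijective_mul_compr₂ (k := R ⧸ maximalIdeal R)
  obtain ⟨φ, hφ⟩ := Projective.exists_quotient_mk_comp_eq _ ψ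
  have hβ := bijective_mul_compr₂_of_quotient hφ hψ
  refine ⟨.ofBijective _ hβ, fun t a y => ?_, forall_apply_mul_eq_zero_iff_mem_annihilator hβ.2⟩
  simp [mul_comm, mul_left_comm]

/-- Let `(R, m)` and `(T, η)` be Noetherian local rings with `T/mT`
zero-dimensional Gorenstein, and let `h : R → T` be a finite local homomorphism making `T`
a free `R`-module. Then there is a `T`-module isomorphism `β : T → T* = Hom_R(T, R)`
(where `T` acts on `T*` by `(t·φ)(x) = φ(tx)`, i.e. `β` is `R`-linear bijective and
`β(t·a)(x) = β(a)(t·x)`), such that for every ideal `J ⊆ T` the preimage under `β` of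
`(T/J)* = {f ∈ T* : f(J) = 0}` is `Ann_T J`. -/
theorem exists_dual_isomorphism_of_free_gorenstein
    (R T : Type*) [CommRing R] [CommRing T] [IsLocalRing R] [IsLocalRing T]
    [IsNoetherianRing R] [IsNoetherianRing T]
    [Algebra R T] [Module.Finite R T] [Module.Free R T]
    (hloc : IsLocalHom (algebraMap R T))
    (hgor : IsZeroDimGorensteinP
      (T ⧸ Ideal.map (algebraMap R T) (IsLocalRing.maximalIdeal R))) :
    ∃ β : T ≃ₗ[R] (T →ₗ[R] R),
      (∀ t a y : T, β (t * a) y = β a (t * y)) ∧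
      (∀ J : Ideal T, ∀ a : T,
        ((∀ j ∈ J, β a j = 0) ↔ a ∈ Submodule.annihilator (J : Submodule T T))) :=
  exists_dual_isomorphism_of_free_gorenstein_general R T hgor
end

section
/- Let h: R → T/J be a finite homomorphism of Noetherian local rings such that (T, η) is a local ring which is free as a module over the local ring (R, m), with T/mT a zero-dimensional Gorenstein ring, and J ⊆ T an ideal; assume the R-module structure of T/J inherited from T coincides with the one induced by h. Then h: R → T/J splits as a map of R-modules (i.e., there exists an R-module homomorphism ρ: T/J → R with ρ(1) = 1) if and only if Ann_T J ⊄ mT. -/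
open IsLocalRing Matrix

theorem Ideal.exists_smul_ne_zero_forall_mem_smul_eq_zero {A M : Type*} [CommRing A]
    [AddCommGroup M] [Module A M] {I : Ideal A} (hI : IsNilpotent I) {x : M} (hx : x ≠ 0) :
    ∃ a : A, a • x ≠ 0 ∧ ∀ z ∈ I, z • a • x = 0 := by
  obtain ⟨n, hn⟩ := hI
  suffices ∀ k : ℕ, ∀ x : M, x ≠ 0 → (∀ z ∈ I ^ k, z • x = 0) →
      ∃ a : A, a • x ≠ 0 ∧ ∀ z ∈ I, z • a • x = 0 from
    this n x hx fun z hz ↦ by simp_all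
  intro k
  induction k with
  | zero => exact fun x hx h ↦ absurd (by simpa using h 1 (by simp)) hx
  | succ k ih =>
    intro x hx h
    by_cases hIx : ∀ z ∈ I, z • x = 0
    · exact ⟨1, by simpa using hx, by simpa using hIx⟩
    obtain ⟨z, hz, hzx⟩ : ∃ z ∈ I, z • x ≠ 0 := by simpa using hIx
    obtain ⟨a, ha, haI⟩ := ih (z • x) hzx fun w hw ↦ by
      rw [smul_smul]; exact h _ (pow_succ I k ▸ Ideal.mul_mem_mul hw hz)
    exact ⟨a * z, by rwa [mul_smul], by simpa [mul_smul] using haI⟩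

theorem IsLocalRing.exists_mul_eq_of_annihilator_maximalIdeal_eq_span {A : Type*} [CommRing A]
    [IsLocalRing A] (hA : IsNilpotent (maximalIdeal A)) {u : A}
    (hu : Submodule.annihilator (maximalIdeal A : Submodule A A) = Ideal.span {u})
    {x : A} (hx : x ≠ 0) : ∃ d : A, d * x = u := by
  obtain ⟨a, hax, hann⟩ := (maximalIdeal A).exists_smul_ne_zero_forall_mem_smul_eq_zero hA hx
  have hmem : a * x ∈ Ideal.span {u} := by
    rw [← hu, Submodule.mem_annihilator]
    exact fun z hz ↦ by simpa [mul_comm] using hann z hz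
  obtain ⟨c, hc⟩ := Ideal.mem_span_singleton'.mp hmem
  have hcu : IsUnit c := by
    by_contra hc'
    have : u * c = 0 := by
      have := Submodule.mem_annihilator.mp (hu ▸ Ideal.mem_span_singleton_self u) c
        ((mem_maximalIdeal c).mpr hc')
      rwa [smul_eq_mul] at this
    exact hax (by rw [smul_eq_mul, ← hc, mul_comm, this])
  exact ⟨hcu.unit⁻¹ * a, by rw [mul_assoc, ← hc, ← mul_assoc, IsUnit.val_inv_mul, one_mul]⟩

theorem LinearMap.apply_mem_of_mem_map_algebraMap {R T : Type*} [CommRing R] [CommRing T]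
    [Algebra R T] (f : T →ₗ[R] R) {I : Ideal R} {x : T} (hx : x ∈ I.map (algebraMap R T)) :
    f x ∈ I := by
  replace hx : x ∈ I • (⊤ : Submodule R T) := by rwa [Ideal.smul_top_eq_map]
  refine Submodule.smul_induction_on hx (fun r hr n _ ↦ ?_) (fun a b ha hb ↦ ?_)
  · simpa using I.mul_mem_right (f n) hr
  · simpa using add_mem ha hb

theorem Matrix.isUnit_det_of_mulVec_mem_maximalIdeal {R ι : Type*} [CommRing R] [IsLocalRing R]
    [Fintype ι] [DecidableEq ι] (A : Matrix ι ι R)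
    (hA : ∀ c : ι → R, (∀ i, (A *ᵥ c) i ∈ maximalIdeal R) → ∀ i, c i ∈ maximalIdeal R) :
    IsUnit A.det := by
  by_contra hdet
  have : (A.map (residue R)).det = 0 := by
    rw [← RingHom.mapMatrix_apply, ← RingHom.map_det, residue_eq_zero_iff, mem_maximalIdeal]
    exact hdet
  obtain ⟨v, hv0, hv⟩ := Matrix.exists_mulVec_eq_zero_iff.mpr this
  obtain ⟨c, rfl⟩ : ∃ c : ι → R, residue R ∘ c = v :=
    ⟨fun i ↦ (residue_surjective (v i)).choose, funext fun i ↦ (residue_surjective _).choose_spec⟩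
  refine hv0 (funext fun i ↦ (residue_eq_zero_iff _).mpr (hA c (fun j ↦ ?_) i))
  rw [← residue_eq_zero_iff, RingHom.map_mulVec, hv, Pi.zero_apply]

section FreeLocal

variable {R T : Type*} [CommRing R] [IsLocalRing R] [CommRing T] [Algebra R T]
  [Module.Finite R T] [Module.Free R T]

theorem exists_dual_apply_eq_one_of_notMem_map_maximalIdeal {x : T}
    (hx : x ∉ (maximalIdeal R).map (algebraMap R T)) :
    ∃ f : Module.Dual R T, f x = 1 := by
  let b := Module.Free.chooseBasis R T
  obtain ⟨i, hi⟩ : ∃ i, IsUnit (b.repr x i) := by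
    by_contra! h
    suffices x ∈ maximalIdeal R • (⊤ : Submodule R T) by
      exact hx (by rwa [Ideal.smul_top_eq_map] at this)
    rw [← b.sum_repr x]
    exact Submodule.sum_mem _ fun i _ ↦
      Submodule.smul_mem_smul ((mem_maximalIdeal _).mpr (h i)) trivial
  exact ⟨(hi.unit⁻¹ : Rˣ) • b.coord i, by simp [Units.smul_def]⟩

theorem bijective_mul_compr₂_of_mul_mem_maximalIdeal (ψ : Module.Dual R T)
    (hψ : ∀ t : T, (∀ s, ψ (t * s) ∈ maximalIdeal R) → t ∈ (maximalIdeal R).map (algebraMap R T)) :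
    Function.Bijective ((LinearMap.mul R T).compr₂ ψ) := by
  classical
  let b := Module.Free.chooseBasis R T
  set α := (LinearMap.mul R T).compr₂ ψ
  have hdet : IsUnit (LinearMap.toMatrix b b.dualBasis α).det := by
    refine Matrix.isUnit_det_of_mulVec_mem_maximalIdeal _ fun c hc ↦ ?_
    obtain ⟨t, rfl⟩ := b.equivFun.surjective c
    have hαt : ∀ s, α t s ∈ maximalIdeal R := by
      have : Submodule.span R (Set.range b) ≤ Submodule.comap (α t) (maximalIdeal R) := by
        refine Submodule.span_le.mpr ?_
        rintro _ ⟨i, rfl⟩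
        simpa [LinearMap.toMatrix_mulVec_repr] using hc i
      rw [b.span_eq] at this
      exact fun s ↦ this Submodule.mem_top
    exact fun i ↦ (b.coord i).apply_mem_of_mem_map_algebraMap (hψ t hαt)
  exact (LinearEquiv.ofIsUnitDet hdet).bijective

theorem exists_bijective_mul_compr₂_of_isZeroDimGorensteinP
    (hgor : IsZeroDimGorensteinP (T ⧸ (maximalIdeal R).map (algebraMap R T))) :
    ∃ ψ : Module.Dual R T, Function.Bijective ((LinearMap.mul R T).compr₂ ψ) := by
  set mT := (maximalIdeal R).map (algebraMap R T)
  obtain ⟨_, _, hdim, u₀, hu₀, hann⟩ := hgor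
  have hnil : IsNilpotent (maximalIdeal (T ⧸ mT)) :=
    (isArtinianRing_iff_isNilpotent_maximalIdeal _).mp <| isArtinianRing_iff_krullDimLE_zero.mpr <|
      ringKrullDimZero_iff_ringKrullDim_eq_zero.mpr hdim
  obtain ⟨u, rfl⟩ := Ideal.Quotient.mk_surjective u₀
  obtain ⟨ψ, hψu⟩ := exists_dual_apply_eq_one_of_notMem_map_maximalIdeal
    (mt Ideal.Quotient.eq_zero_iff_mem.mpr hu₀)
  refine ⟨ψ, bijective_mul_compr₂_of_mul_mem_maximalIdeal ψ fun t ht ↦ ?_⟩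
  by_contra htm
  obtain ⟨d₀, hd⟩ := exists_mul_eq_of_annihilator_maximalIdeal_eq_span hnil
    (hann _ (maximalIdeal.isMaximal _)) (mt Ideal.Quotient.eq_zero_iff_mem.mp htm)
  obtain ⟨d, rfl⟩ := Ideal.Quotient.mk_surjective d₀
  -- `d t ≡ u` modulo `mT`, so `ψ (t d) ≡ ψ u = 1` modulo `m`
  have hdt : ψ (d * t - u) ∈ maximalIdeal R :=
    ψ.apply_mem_of_mem_map_algebraMap (Ideal.Quotient.eq.mp (by rw [map_mul, hd]))
  rw [map_sub, hψu, mul_comm] at hdt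
  exact (maximalIdeal R).one_notMem (by simpa using sub_mem (ht d) hdt)

end FreeLocal

section Splitting

variable {R T : Type*} [CommRing R] [CommRing T] [Algebra R T] {J : Ideal T}

theorem exists_linearMap_quotient_apply_one_eq_one {t : T}
    (ht : t ∈ Submodule.annihilator (J : Submodule T T)) {f : Module.Dual R T} (hf : f t = 1) :
    ∃ ρ : (T ⧸ J) →ₗ[R] R, ρ 1 = 1 := by
  let g : Module.Dual R T := f ∘ₗ LinearMap.mulLeft R t
  have hJ : J.restrictScalars R ≤ LinearMap.ker g := fun j hj ↦ by
    simpa [g] using congrArg f (Submodule.mem_annihilator.mp ht j hj)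
  refine ⟨(J.restrictScalars R).liftQ g hJ ∘ₗ
    (Submodule.Quotient.restrictScalarsEquiv R (J : Submodule T T)).symm.toLinearMap, ?_⟩
  change (J.restrictScalars R).liftQ g hJ
    ((Submodule.Quotient.restrictScalarsEquiv R (J : Submodule T T)).symm
      (Submodule.Quotient.mk 1)) = 1
  rw [Submodule.Quotient.restrictScalarsEquiv_symm_mk]
  simpa [g] using hf

theorem exists_mem_annihilator_apply_eq_one {ψ : Module.Dual R T}
    (hψ : Function.Bijective ((LinearMap.mul R T).compr₂ ψ)) (ρ : (T ⧸ J) →ₗ[R] R)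
    (hρ : ρ 1 = 1) : ∃ t ∈ Submodule.annihilator (J : Submodule T T), ψ t = 1 := by
  obtain ⟨t, ht⟩ := hψ.2 (ρ ∘ₗ (Ideal.Quotient.mkₐ R J).toLinearMap)
  have hψt : ∀ s, ψ (t * s) = ρ (Ideal.Quotient.mk J s) := fun s ↦ congrArg (· s) ht
  refine ⟨t, Submodule.mem_annihilator.mpr fun j hj ↦ hψ.1 ?_, by simpa [hρ] using hψt 1⟩
  ext s
  have hjs : ψ (t * (j * s)) = 0 := by
    rw [hψt, Ideal.Quotient.eq_zero_iff_mem.mpr (J.mul_mem_right s hj), map_zero]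
  simpa [mul_assoc, mul_left_comm j t s] using hjs

end Splitting

theorem splits_iff_annihilator_not_le_general
    (R T : Type*) [CommRing R] [CommRing T] [IsLocalRing R]
    [Algebra R T] [Module.Finite R T] [Module.Free R T]
    (hgor : IsZeroDimGorensteinP
      (T ⧸ Ideal.map (algebraMap R T) (IsLocalRing.maximalIdeal R)))
    (J : Ideal T) :
    (∃ ρ : (T ⧸ J) →ₗ[R] R, ρ 1 = 1) ↔
      ¬ (Submodule.annihilator (J : Submodule T T) ≤
          Ideal.map (algebraMap R T) (IsLocalRing.maximalIdeal R)) := by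
  constructor
  · rintro ⟨ρ, hρ⟩ hle
    obtain ⟨ψ, hψ⟩ := exists_bijective_mul_compr₂_of_isZeroDimGorensteinP hgor
    obtain ⟨t, ht, hψt⟩ := exists_mem_annihilator_apply_eq_one hψ ρ hρ
    exact (maximalIdeal R).one_notMem (hψt ▸ ψ.apply_mem_of_mem_map_algebraMap (hle ht))
  · intro h
    obtain ⟨t, ht, htm⟩ := SetLike.not_le_iff_exists.mp h
    obtain ⟨f, hf⟩ := exists_dual_apply_eq_one_of_notMem_map_maximalIdeal htm
    exact exists_linearMap_quotient_apply_one_eq_one ht hf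

/-- Let `h : R → T/J` be a finite homomorphism of Noetherian local rings,
where `(T, η)` is local and free as a module over the local ring `(R, m)`, `T/mT` is
zero-dimensional Gorenstein, and `J ⊆ T` is an ideal (the `R`-module structure on `T/J`
being the one inherited from `T`). Then `h` splits as a map of `R`-modules (there is an
`R`-linear `ρ : T/J → R` with `ρ 1 = 1`) if and only if `Ann_T J ⊄ mT`. -/
theorem splits_iff_annihilator_not_le
    (R T : Type*) [CommRing R] [CommRing T] [IsLocalRing R] [IsLocalRing T]
    [IsNoetherianRing R] [IsNoetherianRing T]
    [Algebra R T] [Module.Finite R T] [Module.Free R T]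
    (hloc : IsLocalHom (algebraMap R T))
    (hgor : IsZeroDimGorensteinP
      (T ⧸ Ideal.map (algebraMap R T) (IsLocalRing.maximalIdeal R)))
    (J : Ideal T) :
    (∃ ρ : (T ⧸ J) →ₗ[R] R, ρ 1 = 1) ↔
      ¬ (Submodule.annihilator (J : Submodule T T) ≤
          Ideal.map (algebraMap R T) (IsLocalRing.maximalIdeal R)) :=
  splits_iff_annihilator_not_le_general R T hgor J
end

section
/- Let (T, η) be a Gorenstein local ring of dimension d, let x₁, …, x_d be a system of parameters with Q = (x₁, …, x_d), let u ∈ T be a lifting of a socle element of T/Q, and let z ∈ T be a zero divisor. If depth(η, T/(z)) ≥ d − 1, then u·z ∈ Q·(z). -/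
/-!
Let `N = (0 : z)`. Since `depth T = d` and `depth T/(z) ≥ d - 1`, the Koszul cohomology of `x`
vanishes: `H^n(x; T) = 0` for `n < d` and `H^n(x; T/(z)) = 0` for `n < d - 1`. A diagram chase through `0 → zT → T → T/(z) → 0`
turns this into `N ∩ Q ⊆ QN`, so `N ⊄ Q` by Nakayama, as `N ≠ 0`. Some `η^k N` then lies in
`(Q : η) = Q + (u)` but not in `Q`, which forces `u ∈ N + Q`, i.e. `uz ∈ Qz`.
-/

/-- `T` is a Gorenstein local ring: it is Noetherian local, admits a system of parameters
(a family of `dim T` elements with finite-length quotient) which is a regular sequence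
(so `T` is Cohen–Macaulay), and the quotient by the ideal generated by this system of
parameters has one-dimensional socle; the socle condition for `T/Q` is expressed as
`(Q : η) = Q + (u)` for a single element `u ∉ Q`, where `η` is the maximal ideal. -/
def IsGorensteinLocalRingP (T : Type*) [CommRing T] : Prop :=
  IsNoetherianRing T ∧ IsLocalRing T ∧
    ∃ (d : ℕ) (x : Fin d → T), ringKrullDim T = (d : ℕ) ∧
      IsFiniteLength T (T ⧸ Ideal.span (Set.range x)) ∧
      RingTheory.Sequence.IsRegular T (List.ofFn x) ∧
      ∃ u : T, u ∉ Ideal.span (Set.range x) ∧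
        ∀ η : Ideal T, η.IsMaximal →
          Submodule.colon (Ideal.span (Set.range x)) η =
            Ideal.span (Set.range x) ⊔ Ideal.span {u}

open Finset Pointwise

namespace Koszul

variable {R : Type*} [CommRing R] {d : ℕ}

/-- For `i ∈ s`, `e_i ∧ e_{s \ {i}} = sign i s • e_s` in the exterior algebra on
`e_0, …, e_{d-1}`, where `e_s` is the wedge of the `e_j`, `j ∈ s`, in increasing order. -/
def sign (i : Fin d) (s : Finset (Fin d)) : R := (-1) ^ #{j ∈ s | j < i}

lemma sign_mul_self (i : Fin d) (s : Finset (Fin d)) : (sign i s : R) * sign i s = 1 := by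
  rw [sign, ← mul_pow]; norm_num

lemma sign_erase {i : Fin d} {s : Finset (Fin d)} (hi : i ∈ s) (k : Fin d) :
    (sign k (s.erase i) : R) = sign k s * if i < k then -1 else 1 := by
  have hcard : #{j ∈ s | j < k} = #{j ∈ s.erase i | j < k} + if i < k then 1 else 0 := by
    rw [filter_erase]
    split_ifs with h
    · exact (card_erase_add_one (mem_filter.2 ⟨hi, h⟩)).symm
    · rw [erase_eq_of_notMem (by simp [h]), add_zero]
  rw [sign, sign, hcard, pow_add]
  split_ifs <;> simp

lemma sign_insert {j : Fin d} {s : Finset (Fin d)} (hj : j ∉ s) (k : Fin d) :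
    (sign k (insert j s) : R) = sign k s * if j < k then -1 else 1 := by
  have h := sign_erase (R := R) (mem_insert_self j s) k
  rw [erase_insert hj] at h
  rw [h, mul_assoc]
  split_ifs <;> simp

lemma sign_mul_sign_erase {i k : Fin d} {s : Finset (Fin d)} (hi : i ∈ s) (hk : k ∈ s)
    (hik : i ≠ k) : (sign i s : R) * sign k (s.erase i) = -(sign k s * sign i (s.erase k)) := by
  rw [sign_erase hi, sign_erase hk]
  rcases lt_or_gt_of_ne hik with h | h <;> simp [h, h.not_gt] <;> ring

lemma sign_mul_sign_insert_erase {i j : Fin d} {s : Finset (Fin d)} (hi : i ∈ s) (hj : j ∉ s) :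
    (sign i s : R) * sign j (insert j (s.erase i)) =
      -(sign j (insert j s) * sign i (insert j s)) := by
  rw [sign_insert (fun h => hj (mem_of_mem_erase h)), sign_insert hj, sign_insert hj,
    sign_erase hi]
  rcases lt_or_gt_of_ne (ne_of_mem_of_not_mem hi hj) with h | h <;> simp [h, h.not_gt] <;> ring

variable (x : Fin d → R) (M : Type*) [AddCommGroup M] [Module R M]

/-- The Koszul cochains of `x` with coefficients in `M` are the `f : Finset (Fin d) → M`, with
`f s` the coefficient of `e_s`; `diff` is left multiplication by `∑ i, x i • e_i`. -/
def diff : (Finset (Fin d) → M) →ₗ[R] Finset (Fin d) → M :=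
  LinearMap.pi fun s => ∑ i ∈ s, (sign i s * x i) • LinearMap.proj (s.erase i)

variable (R) in
/-- Contraction with the dual basis vector `e_j^*`. -/
def contr (j : Fin d) : (Finset (Fin d) → M) →ₗ[R] Finset (Fin d) → M :=
  LinearMap.pi fun s =>
    if j ∈ s then 0 else (sign j (insert j s) : R) • LinearMap.proj (insert j s)

variable {x M}

lemma diff_apply (f : Finset (Fin d) → M) (s : Finset (Fin d)) :
    diff x M f s = ∑ i ∈ s, (sign i s * x i) • f (s.erase i) := by
  simp [diff]

lemma contr_apply (j : Fin d) (f : Finset (Fin d) → M) (s : Finset (Fin d)) :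
    contr R M j f s = if j ∈ s then 0 else (sign j (insert j s) : R) • f (insert j s) := by
  simp only [contr, LinearMap.pi_apply]
  split_ifs <;> simp

lemma diff_diff (f : Finset (Fin d) → M) : diff x M (diff x M f) = 0 := by
  ext s
  simp only [diff_apply, smul_sum, smul_smul, Pi.zero_apply]
  rw [sum_sigma']
  refine sum_involution (fun p _ => ⟨p.2, p.1⟩) (fun p hp => ?_) (fun p hp _ h => ?_)
    (fun p hp => ?_) (fun _ _ => rfl)
  all_goals obtain ⟨hi, hk⟩ := mem_sigma.1 hp; obtain ⟨hki, hk⟩ := mem_erase.1 hk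
  · rw [erase_right_comm, ← add_smul]
    convert zero_smul R _
    linear_combination (x p.1 * x p.2) * sign_mul_sign_erase (R := R) hi hk hki.symm
  · exact hki (congrArg Sigma.fst h)
  · exact mem_sigma.2 ⟨hk, mem_erase.2 ⟨hki.symm, hi⟩⟩

lemma diff_contr_add_contr_diff (j : Fin d) (f : Finset (Fin d) → M) :
    diff x M (contr R M j f) + contr R M j (diff x M f) = x j • f := by
  ext s
  simp only [Pi.add_apply, Pi.smul_apply, diff_apply, contr_apply]
  by_cases hj : j ∈ s
  · rw [if_pos hj, add_zero, sum_eq_single_of_mem j hj fun i _ hij => by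
      rw [if_pos (mem_erase.2 ⟨Ne.symm hij, hj⟩), smul_zero]]
    rw [if_neg (notMem_erase j s), insert_erase hj, smul_smul]
    congr 1
    linear_combination x j * sign_mul_self (R := R) j s
  · have hji : ∀ i ∈ s, j ∉ s.erase i := fun i _ h => hj (mem_of_mem_erase h)
    rw [if_neg hj, sum_insert hj, erase_insert hj, smul_add, smul_smul, smul_sum,
      sum_congr rfl fun i hi => by rw [if_neg (hji i hi)]]
    have hcancel : ∀ i ∈ s, (sign i s * x i) • (sign j (insert j (s.erase i)) : R) •
        f (insert j (s.erase i)) + (sign j (insert j s) : R) • (sign i (insert j s) * x i) •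
        f ((insert j s).erase i) = 0 := by
      intro i hi
      rw [erase_insert_of_ne (ne_of_mem_of_not_mem hi hj).symm, smul_smul, smul_smul, ← add_smul]
      convert zero_smul R _
      linear_combination x i * sign_mul_sign_insert_erase (R := R) hi hj
    rw [add_left_comm, ← sum_add_distrib, sum_eq_zero hcancel, add_zero, ← mul_assoc,
      sign_mul_self, one_mul]

variable (R M) in
def homogeneous (n : ℕ) : Submodule R (Finset (Fin d) → M) where
  carrier := {f | ∀ s, #s ≠ n → f s = 0}
  add_mem' hf hg s hs := by simp [hf s hs, hg s hs]
  zero_mem' _ _ := rfl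
  smul_mem' c f hf s hs := by simp [hf s hs]

lemma diff_mem_homogeneous {f : Finset (Fin d) → M} {n : ℕ} (hf : f ∈ homogeneous R M n) :
    diff x M f ∈ homogeneous R M (n + 1) := by
  intro s hs
  rw [diff_apply]
  refine sum_eq_zero fun i hi => ?_
  have hs₀ := card_pos.2 ⟨i, hi⟩
  rw [hf (s.erase i) (by rw [card_erase_of_mem hi]; omega), smul_zero]

lemma contr_mem_homogeneous (j : Fin d) {f : Finset (Fin d) → M} {n : ℕ}
    (hf : f ∈ homogeneous R M n) : contr R M j f ∈ homogeneous R M (n - 1) := by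
  intro s hs
  rw [contr_apply]
  split_ifs with hj
  · rfl
  · rw [hf (insert j s) (by rw [card_insert_of_notMem hj]; omega), smul_zero]

lemma eq_zero_of_mem_homogeneous_zero {f g : Finset (Fin d) → M}
    (hf : f ∈ homogeneous R M 0) (hg : diff x M g = f) : f = 0 := by
  ext s
  obtain rfl | hs := eq_or_ne s ∅
  · simp [← hg, diff_apply]
  · exact hf s (card_ne_zero.2 (nonempty_iff_ne_empty.2 hs))

lemma exists_mem_homogeneous_diff_eq {f g : Finset (Fin d) → M} {n : ℕ}
    (hf : f ∈ homogeneous R M (n + 1)) (hg : diff x M g = f) :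
    ∃ g' ∈ homogeneous R M n, diff x M g' = f := by
  have hg' : (fun s => if #s = n then g s else 0) ∈ homogeneous R M n := fun s hs => if_neg hs
  refine ⟨_, hg', funext fun s => ?_⟩
  by_cases hs : #s = n + 1
  · rw [← hg, diff_apply, diff_apply]
    exact sum_congr rfl fun i hi => by rw [if_pos (by rw [card_erase_of_mem hi]; omega)]
  · rw [hf s hs, diff_mem_homogeneous hg' s hs]

lemma diff_comp_linearMap {N : Type*} [AddCommGroup N] [Module R N] (L : M →ₗ[R] N)
    (f : Finset (Fin d) → M) : diff x N (fun s => L (f s)) = fun s => L (diff x M f s) := by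
  ext s
  simp [diff_apply]

variable (x M) in
/-- `H^n(x; M) = 0`. -/
def CohomologyVanishes (n : ℕ) : Prop :=
  ∀ f ∈ homogeneous R M n, diff x M f = 0 → ∃ g, diff x M g = f

lemma exists_sub_diff_mem {p : Submodule R M} {n : ℕ} (hvan : CohomologyVanishes x (M ⧸ p) n)
    {g : Finset (Fin d) → M} (hg : g ∈ homogeneous R M n) (hdg : ∀ s, diff x M g s ∈ p) :
    ∃ k, ∀ s, g s - diff x M k s ∈ p := by
  obtain ⟨kbar, hkbar⟩ := hvan (fun s => p.mkQ (g s))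
    (fun s hs => by simp [hg s hs])
    (by rw [diff_comp_linearMap]; ext s; simpa using hdg s)
  choose k hk using fun s => p.mkQ_surjective (kbar s)
  refine ⟨k, fun s => ?_⟩
  rw [← Submodule.Quotient.mk_eq_zero, Submodule.Quotient.mk_sub, ← p.mkQ_apply,
    ← p.mkQ_apply, ← congrFun (diff_comp_linearMap p.mkQ k) s, funext hk, hkbar, sub_self]

lemma exists_diff_eq_smul {f : Finset (Fin d) → M} {n : ℕ} (hf : f ∈ homogeneous R M n)
    (hcyc : diff x M f = 0) {q : R} (hq : q ∈ Ideal.span (Set.range x)) :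
    ∃ h ∈ homogeneous R M (n - 1), diff x M h = q • f := by
  induction hq using Submodule.span_induction with
  | mem _ hq =>
    obtain ⟨j, rfl⟩ := hq
    refine ⟨_, contr_mem_homogeneous j hf, ?_⟩
    simpa [hcyc] using diff_contr_add_contr_diff (x := x) j f
  | zero => exact ⟨0, zero_mem _, by simp⟩
  | add a b _ _ ha hb =>
    obtain ⟨h₁, hh₁, hd₁⟩ := ha
    obtain ⟨h₂, hh₂, hd₂⟩ := hb
    exact ⟨h₁ + h₂, add_mem hh₁ hh₂, by rw [map_add, hd₁, hd₂, add_smul]⟩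
  | smul c a _ ha =>
    obtain ⟨h, hh, hd⟩ := ha
    exact ⟨c • h, Submodule.smul_mem _ c hh, by rw [map_smul, hd, smul_smul, smul_eq_mul]⟩

lemma exists_diff_eq_pow_smul_of_isSMulRegular {r : R} (hr : IsSMulRegular M r) {n : ℕ}
    (hvan : CohomologyVanishes x (QuotSMulTop r M) n) {f : Finset (Fin d) → M}
    (hf : f ∈ homogeneous R M (n + 1)) {j : ℕ} {h : Finset (Fin d) → M}
    (hh : h ∈ homogeneous R M n) (hdh : diff x M h = r ^ (j + 1) • f) :
    ∃ h' ∈ homogeneous R M n, diff x M h' = r ^ j • f := by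
  obtain ⟨k, hk⟩ := exists_sub_diff_mem hvan hh fun s => by
    rw [hdh, Pi.smul_apply, pow_succ', mul_smul]
    exact Submodule.smul_mem_pointwise_smul _ _ _ trivial
  choose w _ hw using fun s => (Submodule.mem_smul_pointwise_iff_exists _ _ _).1 (hk s)
  have hrw : r • diff x M w = r • (r ^ j • f) := by
    rw [← map_smul, show r • w = h - diff x M k from funext hw, map_sub, diff_diff, sub_zero,
      hdh, pow_succ', mul_smul]
  exact exists_mem_homogeneous_diff_eq (Submodule.smul_mem _ _ hf)
    ((IsSMulRegular.pi fun _ => hr) hrw)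

lemma cohomologyVanishes_zero_of_isSMulRegular {r : R} (hr : IsSMulRegular M r) {m : ℕ}
    (hm : r ^ m ∈ Ideal.span (Set.range x)) : CohomologyVanishes x M 0 := by
  intro f hf hcyc
  obtain ⟨h, -, hdh⟩ := exists_diff_eq_smul hf hcyc hm
  have hf0 : f = 0 := (IsSMulRegular.pi fun _ => hr.pow m) <| by
    dsimp only
    rw [eq_zero_of_mem_homogeneous_zero (Submodule.smul_mem _ _ hf) hdh, smul_zero]
  exact ⟨0, by rw [map_zero, hf0]⟩

lemma cohomologyVanishes_succ_of_isSMulRegular {r : R} (hr : IsSMulRegular M r) {m : ℕ}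
    (hm : r ^ m ∈ Ideal.span (Set.range x)) {n : ℕ}
    (hvan : CohomologyVanishes x (QuotSMulTop r M) n) : CohomologyVanishes x M (n + 1) := by
  intro f hf hcyc
  obtain ⟨h, hh, hdh⟩ := exists_diff_eq_smul hf hcyc hm
  clear hm
  induction m generalizing h with
  | zero => exact ⟨h, by rw [hdh, pow_zero, one_smul]⟩
  | succ j ih =>
    obtain ⟨h', hh', hdh'⟩ := exists_diff_eq_pow_smul_of_isSMulRegular hr hvan hf hh hdh
    exact ih h' hh' hdh'

open RingTheory.Sequence in
theorem cohomologyVanishes_of_isWeaklyRegular {rs : List R} (hrs : IsWeaklyRegular M rs)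
    (hQ : ∀ r ∈ rs, ∃ m, r ^ m ∈ Ideal.span (Set.range x)) {n : ℕ} (hn : n < rs.length) :
    CohomologyVanishes x M n := by
  induction hrs generalizing n with
  | nil => simp at hn
  | cons r rs hr _ ih =>
    obtain ⟨m, hm⟩ := hQ r List.mem_cons_self
    cases n with
    | zero => exact cohomologyVanishes_zero_of_isSMulRegular hr hm
    | succ n =>
      exact cohomologyVanishes_succ_of_isSMulRegular hr hm
        (ih (fun r' hr' => hQ r' (List.mem_cons_of_mem r hr')) (by simpa using hn))

lemma exists_mem_homogeneous_diff_univ_eq {a : R} (ha : a ∈ Ideal.span (Set.range x)) :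
    ∃ g ∈ homogeneous R R (d - 1), diff x R g univ = a := by
  induction ha using Submodule.span_induction with
  | mem _ ha =>
    obtain ⟨i, rfl⟩ := ha
    refine ⟨Pi.single (univ.erase i) (sign i univ), fun s hs => ?_, ?_⟩
    · rw [Pi.single_apply, if_neg (by rintro rfl; simp at hs)]
    · rw [diff_apply, sum_eq_single_of_mem i (mem_univ i) fun k _ hki => by
        rw [Pi.single_apply, if_neg (by rwa [erase_inj _ (mem_univ k)]), smul_zero]]
      rw [Pi.single_eq_same, smul_eq_mul]
      linear_combination x i * sign_mul_self (R := R) i univ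
  | zero => exact ⟨0, zero_mem _, by simp⟩
  | add a b _ _ ha hb =>
    obtain ⟨g₁, hg₁, hd₁⟩ := ha
    obtain ⟨g₂, hg₂, hd₂⟩ := hb
    exact ⟨g₁ + g₂, add_mem hg₁ hg₂, by rw [map_add, Pi.add_apply, hd₁, hd₂]⟩
  | smul c a _ ha =>
    obtain ⟨g, hg, hd⟩ := ha
    exact ⟨c • g, Submodule.smul_mem _ c hg, by rw [map_smul, Pi.smul_apply, hd, smul_eq_mul]⟩

lemma exists_smul_eq_smul_diff {z : R} {n : ℕ} (hR : CohomologyVanishes x R (n + 1))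
    (hRz : CohomologyVanishes x (R ⧸ Ideal.span {z}) n) {g : Finset (Fin d) → R}
    (hg : g ∈ homogeneous R R (n + 1)) (hcyc : diff x R (z • g) = 0) :
    ∃ h, z • g = z • diff x R h := by
  obtain ⟨g₀, hdg₀⟩ := hR _ (Submodule.smul_mem _ z hg) hcyc
  obtain ⟨g₀, hg₀, hdg₀⟩ :=
    exists_mem_homogeneous_diff_eq (Submodule.smul_mem _ z hg) hdg₀
  obtain ⟨k, hk⟩ := exists_sub_diff_mem hRz hg₀ fun s => by
    rw [hdg₀, Pi.smul_apply, smul_eq_mul]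
    exact Ideal.mul_mem_right _ _ (Ideal.mem_span_singleton_self z)
  choose c hc using fun s => Ideal.mem_span_singleton'.1 (hk s)
  refine ⟨c, ?_⟩
  have hzc : z • c = g₀ - diff x R k := funext fun s => by simp [← hc s, mul_comm]
  rw [← map_smul, hzc, map_sub, diff_diff, sub_zero, hdg₀]

/-- Write `a = diff g univ`. Then `z • g` is a cocycle with values in `zR`, and
`H^{d-1}(x; zR) = 0` by the exact sequence `H^{d-2}(x; R/(z)) → H^{d-1}(x; zR) → H^{d-1}(x; R)`,
so `z • g = z • diff h` and the entries of `g - diff h` annihilate `z`. -/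
theorem colon_inf_le_smul_colon {z : R} (hR : ∀ n < d, CohomologyVanishes x R n)
    (hRz : ∀ n < d - 1, CohomologyVanishes x (R ⧸ Ideal.span {z}) n) :
    (⊥ : Ideal R).colon {z} ⊓ Ideal.span (Set.range x) ≤
      Ideal.span (Set.range x) • (⊥ : Ideal R).colon {z} := by
  rintro a ⟨haz, ha⟩
  replace haz : a * z = 0 := by simpa using Submodule.mem_colon_singleton.1 haz
  obtain _ | d := d
  · simp_all
  obtain ⟨g, hg, rfl⟩ := exists_mem_homogeneous_diff_univ_eq ha
  rw [add_tsub_cancel_right] at hg hRz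
  have hcyc : diff x R (z • g) = 0 := by
    ext s
    rw [map_smul, Pi.smul_apply, Pi.zero_apply, smul_eq_mul]
    obtain rfl | hs := eq_or_ne s univ
    · rw [mul_comm, haz]
    · rw [diff_mem_homogeneous hg s (by simpa [← card_eq_iff_eq_univ] using hs), mul_zero]
  obtain ⟨h, hzh⟩ : ∃ h, z • g = z • diff x R h := by
    obtain _ | n := d
    · obtain ⟨g₀, hg₀⟩ := hR 0 one_pos _ (Submodule.smul_mem _ z hg) hcyc
      rw [eq_zero_of_mem_homogeneous_zero (Submodule.smul_mem _ z hg) hg₀]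
      exact ⟨0, by rw [map_zero, smul_zero]⟩
    · exact exists_smul_eq_smul_diff (hR _ (by omega)) (hRz _ (by omega)) hg hcyc
  rw [show diff x R g = diff x R (g - diff x R h) by rw [map_sub, diff_diff, sub_zero],
    diff_apply]
  refine sum_mem fun i _ => ?_
  rw [mul_smul]
  refine Submodule.smul_mem _ _ (Submodule.smul_mem_smul (Ideal.subset_span ⟨i, rfl⟩) ?_)
  rw [Submodule.mem_colon_singleton, Submodule.mem_bot, Pi.sub_apply, smul_eq_mul, sub_mul]
  simpa [mul_comm, sub_eq_zero] using congrFun hzh (univ.erase i)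

end Koszul

section

variable {R : Type*} [CommRing R]

lemma Ideal.exists_pow_mul_le_colon_not_le {I N Q : Ideal R} (hN : ¬ N ≤ Q) {K : ℕ}
    (hK : I ^ K * N ≤ Q) : ∃ k, I ^ k * N ≤ Q.colon I ∧ ¬ I ^ k * N ≤ Q := by
  induction K with
  | zero => simp_all
  | succ K ih =>
    by_cases h : I ^ K * N ≤ Q
    · exact ih h
    refine ⟨K, fun r hr => Submodule.mem_colon.2 fun s hs => hK ?_, h⟩
    simpa [mul_right_comm, ← pow_succ, mul_comm r s] using Ideal.mul_mem_mul hr hs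

open IsLocalRing

variable [IsLocalRing R]

lemma IsLocalRing.mem_sup_of_colon_maximalIdeal_eq {Q N : Ideal R} {u : R}
    (hu : Q.colon (maximalIdeal R) = Q ⊔ Ideal.span {u}) {K : ℕ} (hK : maximalIdeal R ^ K ≤ Q)
    (hN : ¬ N ≤ Q) : u ∈ N ⊔ Q := by
  obtain ⟨k, hcolon, hk⟩ :=
    Ideal.exists_pow_mul_le_colon_not_le hN (Ideal.mul_le_left.trans hK)
  obtain ⟨b, hb, hbQ⟩ := SetLike.not_le_iff_exists.1 hk
  have hbN : b ∈ N := Ideal.mul_le_right hb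
  replace hb := hcolon hb
  rw [hu, Submodule.mem_sup] at hb
  obtain ⟨q, hq, w, hw, rfl⟩ := hb
  obtain ⟨c, rfl⟩ := Ideal.mem_span_singleton'.1 hw
  have huc : u ∈ Q.colon (maximalIdeal R) := by
    rw [hu]; exact Submodule.mem_sup_right (Ideal.mem_span_singleton_self u)
  obtain ⟨c', hc'⟩ : ∃ c', c' * c = 1 := by
    refine IsUnit.exists_left_inv (not_not.1 fun hc => hbQ (add_mem hq ?_))
    simpa [mul_comm] using Submodule.mem_colon.1 huc c ((mem_maximalIdeal c).2 hc)
  rw [show u = c' * (q + c * u) - c' * q by linear_combination (-u) * hc']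
  exact sub_mem (Submodule.mem_sup_left (Ideal.mul_mem_left _ _ hbN))
    (Submodule.mem_sup_right (Ideal.mul_mem_left _ _ hq))

lemma IsLocalRing.not_le_of_inf_le_smul [IsNoetherianRing R] {N Q : Ideal R}
    (hQ : Q ≤ maximalIdeal R) (hNQ : N ⊓ Q ≤ Q • N) (hN : N ≠ ⊥) : ¬ N ≤ Q :=
  fun hle => hN <| Submodule.eq_bot_of_le_smul_of_le_jacobson_bot Q N (IsNoetherian.noetherian N)
    (by simpa [inf_eq_left.2 hle] using hNQ) (by rwa [jacobson_eq_maximalIdeal ⊥ bot_ne_top])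

lemma RingTheory.Sequence.IsRegular.mem_maximalIdeal {rs : List R}
    (h : RingTheory.Sequence.IsRegular R rs) {r : R} (hr : r ∈ rs) : r ∈ maximalIdeal R := by
  have hne : Ideal.ofList rs ≠ ⊤ := fun htop => h.top_ne_smul (by rw [htop, Submodule.top_smul])
  exact le_maximalIdeal hne (Ideal.subset_span hr)

end

/-- Let `(T, η)` be a Gorenstein local ring of dimension `d`, let
`x₁, …, x_d` be a system of parameters with `Q = (x₁, …, x_d)`, `u ∈ T` a lifting of a
socle element of `T/Q`, and `z ∈ T` a zero divisor.  If `depth(η, T/(z)) ≥ d − 1`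
(i.e. there is a `T/(z)`-regular sequence of length `d − 1` inside `η`), then
`u·z ∈ Q·(z)`. -/
theorem socle_parameter_of_depth_ge
    (T : Type*) [CommRing T] [IsLocalRing T] (hGor : IsGorensteinLocalRingP T)
    (d : ℕ) (hdim : ringKrullDim T = (d : ℕ))
    (x : Fin d → T) (hx : ∀ i, x i ∈ IsLocalRing.maximalIdeal T)
    (hsop : IsFiniteLength T (T ⧸ Ideal.span (Set.range x)))
    (u : T)
    (hu : Submodule.colon (Ideal.span (Set.range x)) (IsLocalRing.maximalIdeal T) =
        Ideal.span (Set.range x) ⊔ Ideal.span {u})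
    (z : T) (hz : z ∉ nonZeroDivisors T)
    (hdepth : ∃ y : Fin (d - 1) → T, (∀ i, y i ∈ IsLocalRing.maximalIdeal T) ∧
      RingTheory.Sequence.IsRegular (T ⧸ Ideal.span {z}) (List.ofFn y)) :
    u * z ∈ Ideal.span (Set.range x) * Ideal.span {z} := by
  obtain ⟨_, -, d', x', hdim', -, hreg, -⟩ := hGor
  obtain rfl : d = d' := by exact_mod_cast hdim.symm.trans hdim'
  obtain ⟨y, hy, hyreg⟩ := hdepth
  set Q := Ideal.span (Set.range x)
  set N := (⊥ : Ideal T).colon {z}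
  have hmemN (a : T) : a ∈ N ↔ a * z = 0 := by simp [N, Submodule.mem_colon_singleton]
  have : IsArtinianRing (T ⧸ Q) :=
    isArtinian_of_tower T (isFiniteLength_iff_isNoetherian_isArtinian.1 hsop).2
  obtain ⟨K, hK⟩ := IsLocalRing.exists_maximalIdeal_pow_le_of_isArtinianRing_quotient Q
  have hQ (r : T) (hr : r ∈ IsLocalRing.maximalIdeal T) : ∃ m, r ^ m ∈ Q :=
    ⟨K, hK (Ideal.pow_mem_pow hr K)⟩
  have hT : ∀ n < d, Koszul.CohomologyVanishes x T n := fun n hn =>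
    Koszul.cohomologyVanishes_of_isWeaklyRegular hreg.toIsWeaklyRegular
      (fun r hr => hQ r (hreg.mem_maximalIdeal hr)) (by simpa using hn)
  have hTz : ∀ n < d - 1, Koszul.CohomologyVanishes x (T ⧸ Ideal.span {z}) n := fun n hn =>
    Koszul.cohomologyVanishes_of_isWeaklyRegular hyreg.toIsWeaklyRegular
      (fun r hr => hQ r (by obtain ⟨i, rfl⟩ := List.mem_ofFn.1 hr; exact hy i))
      (by simpa using hn)
  have hN : N ≠ ⊥ := by
    obtain ⟨a, haz, ha⟩ := notMem_nonZeroDivisors_iff_right.1 hz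
    exact (Submodule.ne_bot_iff _).2 ⟨a, (hmemN a).2 haz, ha⟩
  have hNQ : ¬ N ≤ Q := IsLocalRing.not_le_of_inf_le_smul
    (Ideal.span_le.2 (Set.range_subset_iff.2 hx)) (Koszul.colon_inf_le_smul_colon hT hTz) hN
  obtain ⟨a, ha, q, hq, rfl⟩ :=
    Submodule.mem_sup.1 (IsLocalRing.mem_sup_of_colon_maximalIdeal_eq hu hK hNQ)
  rw [add_mul, (hmemN a).1 ha, zero_add]
  exact Ideal.mul_mem_mul hq (Ideal.mem_span_singleton_self z)
end
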